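/- arXiv:2007.01858 — 2 statements merged into one kernel-verified Lean document; each statement's English description precedes it below -/
import Mathlib

section
/- Assume that E ⊥ Tⁿ E and E ⊥ T'ⁿ E for every integer n ≥ 1 (i.e. ⟨e, Tⁿ e'⟩ = 0 = ⟨e, T'ⁿ e'⟩ for all e, e' ∈ E and n ≥ 1), and that the linear span of {T'*ⁿ e : n ∈ ℕ, e ∈ E} ∪ {Tⁿ e : n ∈ ℕ, e ∈ E} is dense in H. Then the linear subspace {x ∈ H : limsup_{n→∞} ‖P_E T'*ⁿ x‖^{1/n} = 0} is dense in H. -/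
open ContinuousLinearMap

/-- Orthogonal projection onto the closed subspace `E`, as an operator `H →L[ℂ] H`. -/
noncomputable def PE {H : Type*} [NormedAddCommGroup H] [InnerProductSpace ℂ H]
    (E : Submodule ℂ H) [CompleteSpace E] : H →L[ℂ] H :=
  E.subtypeL.comp (E.orthogonalProjectionOnto)

/-!
Write `T'* ` for the adjoint of the Cauchy dual. Since `T'* T = I`, we get `T'*ⁿ Tᵐ = T'*ⁿ⁻ᵐ`
for `m ≤ n`, and `E ⊥ T'ᵏ E` says that `T'*ᵏ` maps `E` into `E⊥` for `k ≥ 1`. Hence every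
generator `T'*ᵐ e` or `Tᵐ e` of the dense span satisfies `P_E T'*ⁿ x = 0` for all large `n`.
These vectors form a subspace, so it contains the dense span, and on it the `n`-th roots in the
limsup are eventually `0`.
-/

/-- The Cauchy dual identity `T'* T = I`: a left inverse of the self-adjoint `star t * t` is
itself self-adjoint. -/
theorem star_mul_mul_eq_one {R : Type*} [Monoid R] [StarMul R] {t w : R}
    (h : w * (star t * t) = 1) : star (t * w) * t = 1 := by
  have h' : star t * t * star w = 1 := by
    simpa only [star_mul, star_star, star_one, mul_assoc] using congrArg star h
  have hw : star w = w :=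
    calc star w = w * (star t * t) * star w := by rw [h, one_mul]
      _ = w := by rw [mul_assoc, h', mul_one]
  rw [star_mul, hw, mul_assoc, h]

theorem pow_add_mul_pow_of_mul_eq_one {M : Type*} [Monoid M] {s t : M} (h : s * t = 1)
    (k m : ℕ) : s ^ (k + m) * t ^ m = s ^ k := by
  induction m with
  | zero => simp
  | succ m ih =>
    calc s ^ (k + (m + 1)) * t ^ (m + 1) = s ^ (k + m) * (s * t) * t ^ m := by
          rw [← add_assoc, pow_succ, pow_succ', mul_assoc, mul_assoc, mul_assoc]
      _ = s ^ k := by rw [h, mul_one, ih]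

theorem adjoint_apply_mem_orthogonal {𝕜 H : Type*} [RCLike 𝕜] [NormedAddCommGroup H]
    [InnerProductSpace 𝕜 H] [CompleteSpace H] {A : H →L[𝕜] H} {E : Submodule 𝕜 H}
    (h : ∀ e ∈ E, ∀ e' ∈ E, inner 𝕜 e (A e') = 0) {e : H} (he : e ∈ E) :
    adjoint A e ∈ Eᗮ := by
  rw [Submodule.mem_orthogonal']
  intro u hu
  rw [adjoint_inner_left]
  exact h e he u hu

theorem PE_apply_eq_zero_of_mem_orthogonal {H : Type*} [NormedAddCommGroup H]
    [InnerProductSpace ℂ H] {E : Submodule ℂ H} [CompleteSpace E] {x : H} (hx : x ∈ Eᗮ) :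
    PE E x = 0 := by
  rw [PE, comp_apply, Submodule.orthogonalProjectionOnto_apply_of_mem_orthogonal hx, map_zero]

def Submodule.eventuallyKer {R M N : Type*} [Semiring R] [AddCommMonoid M] [AddCommMonoid N]
    [Module R M] [Module R N] (f : ℕ → M →ₗ[R] N) : Submodule R M where
  carrier := {x | ∀ᶠ n in Filter.atTop, f n x = 0}
  add_mem' ha hb := by
    filter_upwards [ha, hb] with n ha hb
    rw [map_add, ha, hb, add_zero]
  zero_mem' := Filter.Eventually.of_forall fun n => map_zero (f n)
  smul_mem' c x hx := by
    filter_upwards [hx] with n hx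
    rw [map_smul, hx, smul_zero]

theorem limsup_rpow_one_div_eq_zero_of_eventually_eq_zero {u : ℕ → ℝ}
    (hu : ∀ᶠ n in Filter.atTop, u n = 0) :
    Filter.limsup (fun n : ℕ => u n ^ (1 / (n : ℝ))) Filter.atTop = 0 := by
  have hev : (fun n : ℕ => u n ^ (1 / (n : ℝ))) =ᶠ[Filter.atTop] fun _ => 0 := by
    filter_upwards [hu, Filter.eventually_ge_atTop 1] with n hun hn
    have hn' : (0 : ℝ) < n := by exact_mod_cast hn
    rw [hun, Real.zero_rpow (by positivity)]
  rw [Filter.limsup_congr hev, Filter.limsup_const]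

theorem stmt_15_general {H : Type*} [NormedAddCommGroup H] [InnerProductSpace ℂ H] [CompleteSpace H]
    (T T' W : H →L[ℂ] H)
    (hW1 : W.comp ((ContinuousLinearMap.adjoint T).comp T) = ContinuousLinearMap.id ℂ H)
    (hT' : T' = T.comp W)
    (E : Submodule ℂ H) [CompleteSpace E]
    (horth : ∀ n : ℕ, 1 ≤ n → ∀ e ∈ E, ∀ e' ∈ E,
      (inner ℂ e ((T ^ n) e') : ℂ) = 0 ∧ (inner ℂ e ((T' ^ n) e') : ℂ) = 0)
    (hdense : Dense (↑(Submodule.span ℂ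
        ({y : H | ∃ (n : ℕ), ∃ e ∈ E, y = ((ContinuousLinearMap.adjoint T') ^ n) e} ∪
         {y : H | ∃ (n : ℕ), ∃ e ∈ E, y = (T ^ n) e})) : Set H)) :
    Dense {x : H | Filter.limsup
      (fun n : ℕ => ‖PE E (((ContinuousLinearMap.adjoint T') ^ n) x)‖ ^ (1 / (n : ℝ)))
      Filter.atTop = 0} := by
  have hdual : adjoint T' * T = 1 := by
    rw [hT', ← star_eq_adjoint]
    exact star_mul_mul_eq_one (by rw [star_eq_adjoint]; exact hW1)
  have hvanish : ∀ k, 1 ≤ k → ∀ e ∈ E, PE E ((adjoint T' ^ k) e) = 0 := fun k hk e he => by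
    refine PE_apply_eq_zero_of_mem_orthogonal ?_
    rw [← star_eq_adjoint, ← star_pow, star_eq_adjoint]
    exact adjoint_apply_mem_orthogonal (fun e he e' he' => (horth k hk e he e' he').2) he
  let Z := Submodule.eventuallyKer fun n => ((PE E).comp (adjoint T' ^ n) : H →ₗ[ℂ] H)
  refine hdense.mono fun x hx => limsup_rpow_one_div_eq_zero_of_eventually_eq_zero ?_
  have hxZ : x ∈ Z := by
    refine Submodule.span_le.mpr ?_ hx
    rintro y (⟨m, e, he, rfl⟩ | ⟨m, e, he, rfl⟩)
    · filter_upwards [Filter.eventually_ge_atTop 1] with n hn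
      change PE E ((adjoint T' ^ n * adjoint T' ^ m) e) = 0
      rw [← pow_add]
      exact hvanish _ (by omega) e he
    · filter_upwards [Filter.eventually_ge_atTop (m + 1)] with n hn
      obtain ⟨k, rfl⟩ : ∃ k, n = k + 1 + m := ⟨n - m - 1, by omega⟩
      change PE E ((adjoint T' ^ (k + 1 + m) * T ^ m) e) = 0
      rw [pow_add_mul_pow_of_mul_eq_one hdual]
      exact hvanish _ (by omega) e he
  filter_upwards [hxZ] with n hn
  exact norm_eq_zero.mpr hn

theorem stmt_15 {H : Type*} [NormedAddCommGroup H] [InnerProductSpace ℂ H] [CompleteSpace H]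
    (T T' W : H →L[ℂ] H)
    (hleft : ∃ S : H →L[ℂ] H, S.comp T = ContinuousLinearMap.id ℂ H)
    (hW1 : W.comp ((ContinuousLinearMap.adjoint T).comp T) = ContinuousLinearMap.id ℂ H)
    (hW2 : ((ContinuousLinearMap.adjoint T).comp T).comp W = ContinuousLinearMap.id ℂ H)
    (hT' : T' = T.comp W)
    (E : Submodule ℂ H) [CompleteSpace E]
    (horth : ∀ n : ℕ, 1 ≤ n → ∀ e ∈ E, ∀ e' ∈ E,
      (inner ℂ e ((T ^ n) e') : ℂ) = 0 ∧ (inner ℂ e ((T' ^ n) e') : ℂ) = 0)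
    (hdense : Dense (↑(Submodule.span ℂ
        ({y : H | ∃ (n : ℕ), ∃ e ∈ E, y = ((ContinuousLinearMap.adjoint T') ^ n) e} ∪
         {y : H | ∃ (n : ℕ), ∃ e ∈ E, y = (T ^ n) e})) : Set H)) :
    Dense {x : H | Filter.limsup
      (fun n : ℕ => ‖PE E (((ContinuousLinearMap.adjoint T') ^ n) x)‖ ^ (1 / (n : ℝ)))
      Filter.atTop = 0} :=
  stmt_15_general T T' W hW1 hT' E horth hdense
end

section
/- Assume that E ⊥ Tⁿ E and E ⊥ T'ⁿ E for every integer n ≥ 1 (i.e. ⟨e, Tⁿ e'⟩ = 0 = ⟨e, T'ⁿ e'⟩ for all e, e' ∈ E and n ≥ 1). Then for every e ∈ E and all m, n ∈ ℕ: P_E T'*ⁿ Tᵐ e = e if n = m, and P_E T'*ⁿ Tᵐ e = 0 if n ≠ m. -/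
open ContinuousLinearMap

/-!
Since `W` is a left inverse of the self-adjoint operator `T*T`, it is its two-sided inverse and
hence self-adjoint, so the Cauchy dual satisfies `T'* T = 1`. In any monoid, `a * b = 1` gives
`aⁿ bⁿ⁺ᵏ = bᵏ` and `aᵐ⁺ᵏ bᵐ = aᵏ`, so `T'*ⁿ Tᵐ e` is `e`, `Tᵏ e` or `T'*ᵏ e` with `k ≥ 1`.
The last two lie in `Eᗮ`: the first by hypothesis, the second because
`⟪u, T'*ᵏ e⟫ = ⟪T'ᵏ u, e⟫`.
-/

section Monoid

variable {M : Type*} [Monoid M] {a b : M}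

theorem pow_mul_pow_add_eq_pow_of_mul_eq_one (h : a * b = 1) (n k : ℕ) :
    a ^ n * b ^ (n + k) = b ^ k := by
  rw [pow_add, ← mul_assoc, pow_mul_pow_eq_one n h, one_mul]

theorem pow_add_mul_pow_eq_pow_of_mul_eq_one (h : a * b = 1) (k m : ℕ) :
    a ^ (k + m) * b ^ m = a ^ k := by
  rw [pow_add, mul_assoc, pow_mul_pow_eq_one m h, mul_one]

end Monoid

section StarMonoid

variable {R : Type*} [Monoid R] [StarMul R]

theorem star_eq_self_of_mul_eq_one {A W : R} (hA : IsSelfAdjoint A) (hW : W * A = 1) :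
    star W = W := by
  have hW' : A * star W = 1 := by
    simpa only [star_mul, hA.star_eq, star_one] using congrArg star hW
  calc star W = W * A * star W := by rw [hW, one_mul]
    _ = W := by rw [mul_assoc, hW', mul_one]

theorem star_mul_mul_self_eq_one {T W : R} (hW : W * (star T * T) = 1) :
    star (T * W) * T = 1 := by
  rw [star_mul, star_eq_self_of_mul_eq_one (IsSelfAdjoint.star_mul_self T) hW, mul_assoc, hW]

end StarMonoid

section InnerProductSpace

variable {𝕜 H : Type*} [RCLike 𝕜] [NormedAddCommGroup H] [InnerProductSpace 𝕜 H]
  [CompleteSpace H]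

theorem adjoint_apply_mem_orthogonal_s16 {E : Submodule 𝕜 H} {A : H →L[𝕜] H}
    (hA : ∀ x ∈ E, A x ∈ Eᗮ) {x : H} (hx : x ∈ E) : adjoint A x ∈ Eᗮ := by
  refine (Submodule.mem_orthogonal E _).2 fun u hu => ?_
  rw [adjoint_inner_right, ← inner_conj_symm,
    (Submodule.mem_orthogonal E _).1 (hA u hu) x hx, map_zero]

end InnerProductSpace

theorem PE_eq_starProjection {H : Type*} [NormedAddCommGroup H] [InnerProductSpace ℂ H]
    (E : Submodule ℂ H) [CompleteSpace E] : PE E = E.starProjection :=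
  rfl

theorem stmt_16_general {H : Type*} [NormedAddCommGroup H] [InnerProductSpace ℂ H] [CompleteSpace H]
    (T T' W : H →L[ℂ] H)
    (hW1 : W.comp ((ContinuousLinearMap.adjoint T).comp T) = ContinuousLinearMap.id ℂ H)
    (hT' : T' = T.comp W)
    (E : Submodule ℂ H) [CompleteSpace E]
    (horth : ∀ n : ℕ, 1 ≤ n → ∀ e ∈ E, ∀ e' ∈ E,
      (inner ℂ e ((T ^ n) e') : ℂ) = 0 ∧ (inner ℂ e ((T' ^ n) e') : ℂ) = 0) :
    ∀ e ∈ E, ∀ (n m : ℕ),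
      PE E (((ContinuousLinearMap.adjoint T') ^ n) ((T ^ m) e)) =
        if n = m then e else 0 := by
  have hdual : adjoint T' * T = 1 := by
    rw [hT', ← star_eq_adjoint]
    exact star_mul_mul_self_eq_one hW1
  have hT_orth : ∀ k, 1 ≤ k → ∀ x ∈ E, (T ^ k) x ∈ Eᗮ := fun k hk x hx =>
    (Submodule.mem_orthogonal E _).2 fun u hu => (horth k hk u hu x hx).1
  have hT'_orth : ∀ k, 1 ≤ k → ∀ x ∈ E, (T' ^ k) x ∈ Eᗮ := fun k hk x hx =>
    (Submodule.mem_orthogonal E _).2 fun u hu => (horth k hk u hu x hx).2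
  intro e he n m
  rcases le_or_gt n m with hle | hlt
  · obtain ⟨k, rfl⟩ := Nat.exists_eq_add_of_le hle
    rw [show (adjoint T' ^ n) ((T ^ (n + k)) e) = (T ^ k) e from
        DFunLike.congr_fun (pow_mul_pow_add_eq_pow_of_mul_eq_one hdual n k) e,
      PE_eq_starProjection]
    rcases Nat.eq_zero_or_pos k with rfl | hk
    · simpa using Submodule.starProjection_eq_self_iff.2 he
    · rw [if_neg (by omega), Submodule.starProjection_apply_eq_zero_iff]
      exact hT_orth k hk e he
  · obtain ⟨k, rfl⟩ : ∃ k, n = k + m := ⟨n - m, by omega⟩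
    rw [show (adjoint T' ^ (k + m)) ((T ^ m) e) = (adjoint T' ^ k) e from
        DFunLike.congr_fun (pow_add_mul_pow_eq_pow_of_mul_eq_one hdual k m) e,
      PE_eq_starProjection, if_neg (by omega), Submodule.starProjection_apply_eq_zero_iff,
      ← star_eq_adjoint, ← star_pow, star_eq_adjoint]
    exact adjoint_apply_mem_orthogonal_s16 (hT'_orth k (by omega)) he

theorem stmt_16 {H : Type*} [NormedAddCommGroup H] [InnerProductSpace ℂ H] [CompleteSpace H]
    (T T' W : H →L[ℂ] H)
    (hleft : ∃ S : H →L[ℂ] H, S.comp T = ContinuousLinearMap.id ℂ H)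
    (hW1 : W.comp ((ContinuousLinearMap.adjoint T).comp T) = ContinuousLinearMap.id ℂ H)
    (hW2 : ((ContinuousLinearMap.adjoint T).comp T).comp W = ContinuousLinearMap.id ℂ H)
    (hT' : T' = T.comp W)
    (E : Submodule ℂ H) [CompleteSpace E]
    (horth : ∀ n : ℕ, 1 ≤ n → ∀ e ∈ E, ∀ e' ∈ E,
      (inner ℂ e ((T ^ n) e') : ℂ) = 0 ∧ (inner ℂ e ((T' ^ n) e') : ℂ) = 0) :
    ∀ e ∈ E, ∀ (n m : ℕ),
      PE E (((ContinuousLinearMap.adjoint T') ^ n) ((T ^ m) e)) =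
        if n = m then e else 0 :=
  stmt_16_general T T' W hW1 hT' E horth
end
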